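/- arXiv:1309.4186 — 2 statements merged into one kernel-verified Lean document; each statement's English description precedes it below -/
import Mathlib

section
/- For every n ≥ 3 there exist a 2-by-n totally positive real matrix A and a real number α > 0 such that the number of pairs (i,j) with 1 ≤ i < j ≤ n and det A[{1,2}|{i,j}] = α is at least 2n − 3. -/
/-!
Take the columns `(1, 1)` and `(c j, c j + 1)` for a positive, strictly decreasing sequence `c`.
Every 2-by-2 minor through the first column is `1`, and the minor of two later columns `j < l`
is `c j - c l > 0`. For `n = k + 2` and `c j = k + 1 - j`, the `n - 1` pairs through the first
column and the `n - 2` consecutive pairs of later columns all give the minor `1`.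
-/

/-- An m-by-n real matrix is totally positive if every minor of it
(of every size) is strictly positive. -/
def TotallyPositive {m n : ℕ} (A : Matrix (Fin m) (Fin n) ℝ) : Prop :=
  ∀ (k : ℕ) (f : Fin k → Fin m) (g : Fin k → Fin n),
    StrictMono f → StrictMono g → 0 < (A.submatrix f g).det

open Finset

theorem TotallyPositive.of_two_rows {n : ℕ} (A : Matrix (Fin 2) (Fin n) ℝ)
    (hentry : ∀ i j, 0 < A i j)
    (hminor : ∀ u v, u < v → 0 < A 0 u * A 1 v - A 0 v * A 1 u) :
    TotallyPositive A := by
  intro k f g hf hg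
  have hk : k ≤ 2 := by simpa using Fintype.card_le_of_injective f hf.injective
  interval_cases k
  · simp
  · simpa [Matrix.det_fin_one] using hentry (f 0) (g 0)
  · have hf01 : f 0 < f 1 := hf (by decide)
    have hf0 : f 0 = 0 := Fin.ext (by omega)
    have hf1 : f 1 = 1 := Fin.ext (by omega)
    simpa [Matrix.det_fin_two, hf0, hf1] using hminor (g 0) (g 1) (hg (by decide))

section FanMatrix

variable {m : ℕ} (c : Fin m → ℝ)

def fanMatrix : Matrix (Fin 2) (Fin (m + 1)) ℝ :=
  Matrix.of fun i => Matrix.vecCons 1 fun j => c j + i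

theorem fanMatrix_minor_zero_succ (j : Fin m) :
    fanMatrix c 0 0 * fanMatrix c 1 j.succ - fanMatrix c 0 j.succ * fanMatrix c 1 0 = 1 := by
  simp [fanMatrix]

theorem fanMatrix_minor_succ_succ (j l : Fin m) :
    fanMatrix c 0 j.succ * fanMatrix c 1 l.succ - fanMatrix c 0 l.succ * fanMatrix c 1 j.succ =
      c j - c l := by
  simp only [fanMatrix, Matrix.of_apply, Matrix.cons_val_succ, Fin.val_zero, Fin.val_one]
  push_cast
  ring

theorem fanMatrix_totallyPositive (hpos : ∀ j, 0 < c j) (hanti : StrictAnti c) :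
    TotallyPositive (fanMatrix c) := by
  refine .of_two_rows _ (fun i j => ?_) fun u v huv => ?_
  · cases j using Fin.cases with
    | zero => simp [fanMatrix]
    | succ j => simpa [fanMatrix] using add_pos_of_pos_of_nonneg (hpos j) i.val.cast_nonneg
  · induction v using Fin.cases with
    | zero => exact absurd huv (Fin.not_lt_zero u)
    | succ l =>
      induction u using Fin.cases with
      | zero => simp [fanMatrix_minor_zero_succ]
      | succ j =>
        rw [fanMatrix_minor_succ_succ, sub_pos]
        exact hanti (Fin.succ_lt_succ_iff.mp huv)

end FanMatrix

theorem two_mul_add_one_le_card_filter {k : ℕ} (P : Fin (k + 2) × Fin (k + 2) → Prop)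
    [DecidablePred P] (hfan : ∀ j : Fin (k + 1), P (0, j.succ))
    (hpath : ∀ j : Fin k, P (j.castSucc.succ, j.succ.succ)) :
    2 * k + 1 ≤ #{q | P q} := by
  let fan : Fin (k + 1) ↪ Fin (k + 2) × Fin (k + 2) :=
    ⟨fun j => (0, j.succ), fun j l h => Fin.succ_injective _ (Prod.ext_iff.mp h).2⟩
  let path : Fin k ↪ Fin (k + 2) × Fin (k + 2) :=
    ⟨fun j => (j.castSucc.succ, j.succ.succ), fun j l h =>
      Fin.succ_injective _ (Fin.succ_injective _ (Prod.ext_iff.mp h).2)⟩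
  have hdisj : Disjoint (univ.map fan) (univ.map path) := by
    simp only [disjoint_left, mem_map, mem_univ, true_and, not_exists]
    rintro _ ⟨j, rfl⟩ l h
    exact Fin.succ_ne_zero l.castSucc (congrArg Prod.fst h)
  calc 2 * k + 1 = #((univ.map fan).disjUnion (univ.map path) hdisj) := by
        simp only [card_disjUnion, card_map, card_univ, Fintype.card_fin]; ring
    _ ≤ #{q | P q} := card_le_card fun q hq => by
        simp only [disjUnion_eq_union, mem_union, mem_map, mem_univ, true_and] at hq
        rcases hq with ⟨j, rfl⟩ | ⟨j, rfl⟩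
        · exact mem_filter.mpr ⟨mem_univ _, hfan j⟩
        · exact mem_filter.mpr ⟨mem_univ _, hpath j⟩

/-- for every n ≥ 3 there is a 2-by-n totally positive matrix
with at least 2n − 3 of its 2-by-2 minors equal to a common value α > 0. -/
theorem stmt_16 (n : ℕ) (hn : 3 ≤ n) :
    ∃ (A : Matrix (Fin 2) (Fin n) ℝ) (α : ℝ), TotallyPositive A ∧ 0 < α ∧
      2 * n - 3 ≤ (Finset.univ.filter fun q : Fin n × Fin n =>
        q.1 < q.2 ∧ A 0 q.1 * A 1 q.2 - A 0 q.2 * A 1 q.1 = α).card := by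
  obtain ⟨k, rfl⟩ : ∃ k, n = k + 2 := ⟨n - 2, by omega⟩
  let c : Fin (k + 1) → ℝ := fun j => k + 1 - j
  have hpos : ∀ j, 0 < c j := fun j => by
    have : (j : ℝ) < k + 1 := by exact_mod_cast j.isLt
    simp only [c]; linarith
  have hanti : StrictAnti c := fun j l hjl => by
    have : (j : ℝ) < l := by exact_mod_cast hjl
    simp only [c]; linarith
  refine ⟨fanMatrix c, 1, fanMatrix_totallyPositive c hpos hanti, one_pos, ?_⟩
  rw [show 2 * (k + 2) - 3 = 2 * k + 1 by omega]
  refine two_mul_add_one_le_card_filter _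
    (fun j => ⟨Fin.succ_pos j, fanMatrix_minor_zero_succ c j⟩) fun j => ⟨Fin.succ_lt_succ_iff.mpr Fin.castSucc_lt_succ, ?_⟩
  rw [fanMatrix_minor_succ_succ]
  simp [c]
end

section
/- Let E = [e_{ij}] be an m-by-n real matrix such that e_{i+1,j+1} − e_{i+1,j} − e_{i,j+1} + e_{i,j} > 0 for all 1 ≤ i < m and 1 ≤ j < n, and let t > 1 be a real number. Then the matrix B with entries B i j = t^{e_{ij}} is TP₂. -/
/-- if E satisfies e_{i+1,j+1} − e_{i+1,j} − e_{i,j+1} + e_{i,j} > 0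
for all adjacent quadruples and t > 1, then the matrix B with B i j = t^{e_{ij}}
is TP₂: all entries and all 2-by-2 minors are strictly positive. -/
theorem stmt_18 (m n : ℕ) (E : Matrix (Fin m) (Fin n) ℝ)
    (hE : ∀ (i : Fin m) (j : Fin n) (hi : (i : ℕ) + 1 < m) (hj : (j : ℕ) + 1 < n),
      0 < E ⟨(i : ℕ) + 1, hi⟩ ⟨(j : ℕ) + 1, hj⟩ - E ⟨(i : ℕ) + 1, hi⟩ j
          - E i ⟨(j : ℕ) + 1, hj⟩ + E i j)
    (t : ℝ) (ht : 1 < t) :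
    (∀ (i : Fin m) (j : Fin n), 0 < t ^ E i j) ∧
    (∀ (i i' : Fin m) (j j' : Fin n), i < i' → j < j' →
      0 < t ^ E i j * t ^ E i' j' - t ^ E i j' * t ^ E i' j) := by
  have ht0 : (0:ℝ) < t := lt_trans one_pos ht
  set F : ℕ → ℕ → ℝ := fun i j =>
    if h : i < m ∧ j < n then E ⟨i, h.1⟩ ⟨j, h.2⟩ else 0 with hF
  have hFval : ∀ (i : Fin m) (j : Fin n), F i j = E i j := by
    intro i j
    simp [hF, i.isLt, j.isLt]
  have hE' : ∀ i j, i + 1 < m → j + 1 < n →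
      0 < F (i+1) (j+1) - F (i+1) j - F i (j+1) + F i j := by
    intro i j hi hj
    have him : i < m := Nat.lt_of_succ_lt hi
    have hjn : j < n := Nat.lt_of_succ_lt hj
    have := hE ⟨i, him⟩ ⟨j, hjn⟩ hi hj
    simpa [hF, hi, hj, him, hjn] using this
  -- adjacent columns, arbitrary row gap
  have L1 : ∀ k i j, i + k + 1 < m → j + 1 < n →
      0 < F (i+k+1) (j+1) - F (i+k+1) j - F i (j+1) + F i j := by
    intro k
    induction k with
    | zero => intro i j hi hj; exact hE' i j hi hj
    | succ k ih =>
      intro i j hi hj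
      have h1 := ih i j (by omega) hj
      have h2 := hE' (i+k+1) j (by omega) hj
      have : i + (k+1) + 1 = (i+k+1) + 1 := by omega
      rw [this]
      linarith
  -- arbitrary gaps
  have L2 : ∀ l i i' j, i < i' → i' < m → j + l + 1 < n →
      0 < F i' (j+l+1) - F i' j - F i (j+l+1) + F i j := by
    intro l
    induction l with
    | zero =>
      intro i i' j hii hi hj
      obtain ⟨k, rfl⟩ : ∃ k, i' = i + k + 1 := ⟨i' - i - 1, by omega⟩
      exact L1 _ i j hi hj
    | succ l ih =>
      intro i i' j hii hi hj
      have h1 := ih i i' j hii hi (by omega)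
      obtain ⟨k, rfl⟩ : ∃ k, i' = i + k + 1 := ⟨i' - i - 1, by omega⟩
      have h2 := L1 k i (j+l+1) hi (by omega)
      have : j + (l+1) + 1 = (j+l+1) + 1 := by omega
      rw [this]
      linarith
  constructor
  · intro i j; exact Real.rpow_pos_of_pos ht0 _
  · intro i i' j j' hii hjj
    have key : E i j' + E i' j < E i j + E i' j' := by
      obtain ⟨l, hl⟩ : ∃ l, (j':ℕ) = j + l + 1 := ⟨j' - j - 1, by omega⟩
      have := L2 l i i' j (by exact_mod_cast hii) i'.isLt (by omega)
      rw [← hl] at this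
      rw [← hFval i j, ← hFval i' j', ← hFval i j', ← hFval i' j]
      linarith
    have h1 : t ^ (E i j' + E i' j) < t ^ (E i j + E i' j') :=
      (Real.rpow_lt_rpow_left_iff ht).mpr key
    rw [Real.rpow_add ht0, Real.rpow_add ht0] at h1
    nlinarith [Real.rpow_pos_of_pos ht0 (E i j'), Real.rpow_pos_of_pos ht0 (E i' j)]
end
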